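/- In the n-sided regular polygon theory with n even, the nontrivial extremal effects are the n points e_k = (1/2)(cos(2kπ/n) + tan(π/n)sin(2kπ/n), −sin(2kπ/n) + tan(π/n)cos(2kπ/n), 1), k = 0,…,n−1, and all of them lie on the hyperplane z = 1/2; together with o = (0,0,0) and u = (0,0,1) they are all the extremal points of E. -/

import Mathlib

open Real

/-- The `k`-th pure state of the `n`-sided regular polygon theory. -/
noncomputable def pureState (n : ℕ) (k : ℕ) : ℝ × ℝ × ℝ :=
  (Real.cos (2 * k * π / n), Real.sin (2 * k * π / n), 1)

/-- The pairing between effect vectors and state vectors. -/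
def pair (e w : ℝ × ℝ × ℝ) : ℝ := e.1 * w.1 + e.2.1 * w.2.1 + e.2.2 * w.2.2

/-- The effect space of the `n`-sided regular polygon theory. -/
noncomputable def polygonE (n : ℕ) : Set (ℝ × ℝ × ℝ) :=
  {e | ∀ k : Fin n, 0 ≤ pair e (pureState n k) ∧ pair e (pureState n k) ≤ 1}

/-- The nontrivial extremal effect `e_k` of the even-sided polygon effect space. -/
noncomputable def extEffect (n : ℕ) (k : ℕ) : ℝ × ℝ × ℝ :=
  ((1/2) * (Real.cos (2 * k * π / n) + Real.tan (π / n) * Real.sin (2 * k * π / n)),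
   (1/2) * (-Real.sin (2 * k * π / n) + Real.tan (π / n) * Real.cos (2 * k * π / n)),
   (1/2 : ℝ))

/-!
Since `n` is even, the pure states come in antipodal pairs, so `e = (v, z)` is an effect iff
`|⟨v, u_j⟩| ≤ min z (1 - z)` for every direction `u_j = (cos (2jπ/n), sin (2jπ/n))`: `E` is the
double pyramid with apexes `o` and `u` over the polygon `|⟨v, u_j⟩| ≤ 1/2` at height `1/2`, whose
vertices are the `e_k`. For `j` maximizing `⟨v, u_j⟩`, the vector `v` is a
nonnegative combination of the two vertices adjacent to `u_j`, which writes every effect as a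
convex combination of `o`, `u` and two of the `e_k`. Conversely `o`, `u` and each `e_k` are the
unique maximizers on `E` of the linear functionals `-z`, `z` and `⟨v, u_j + u_{j+1}⟩`.
-/

open Set

theorem mem_extremePoints_of_forall_le_of_eq {E : Type*} [AddCommGroup E] [Module ℝ E]
    {A : Set E} {x : E} (f : E →ₗ[ℝ] ℝ) (hx : x ∈ A) (hle : ∀ y ∈ A, f y ≤ f x)
    (heq : ∀ y ∈ A, f y = f x → y = x) : x ∈ A.extremePoints ℝ := by
  refine ⟨hx, fun y₁ hy₁ y₂ hy₂ ⟨a, b, ha, hb, hab, hxy⟩ => heq y₁ hy₁ ?_⟩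
  have hcomb : a * f y₁ + b * f y₂ = f x := by rw [← hxy]; simp
  have hsplit : a * f x + b * f x = f x := by rw [← add_mul, hab, one_mul]
  have hy₂ := mul_le_mul_of_nonneg_left (hle y₂ hy₂) hb.le
  exact le_antisymm (hle y₁ hy₁) (le_of_mul_le_mul_left (by linarith) ha)

theorem cos_le_cos_of_le_of_le_two_pi_sub {δ x : ℝ} (hδ : 0 ≤ δ) (h₁ : δ ≤ x)
    (h₂ : x ≤ 2 * π - δ) : cos x ≤ cos δ := by
  rcases le_total x π with hx | hx
  · exact cos_le_cos_of_nonneg_of_le_pi hδ hx h₁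
  · rw [← cos_two_pi_sub x]
    exact cos_le_cos_of_nonneg_of_le_pi hδ (by linarith) (by linarith)

theorem cos_odd_mul_pi_div_le {n : ℕ} (hn : n ≠ 0) {m : ℤ} (hm : Odd m) :
    cos (m * π / n) ≤ cos (π / n) := by
  have hn' : (0 : ℝ) < n := by positivity
  have h2n : (0 : ℤ) < 2 * n := by omega
  set r := m % (2 * n) with hr
  set q := m / (2 * n) with hq
  have hmrq : m = r + 2 * (n * q) := by rw [hr, hq, ← mul_assoc, Int.emod_add_mul_ediv]
  have hr0 : 0 ≤ r := Int.emod_nonneg _ h2n.ne'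
  have hr1 : r < 2 * n := Int.emod_lt_of_pos _ h2n
  -- `r` is odd because `m` is and `2 * n` is even
  have hr_bounds : (1 : ℝ) ≤ r ∧ (r : ℝ) + 1 ≤ 2 * n := by
    obtain ⟨t, ht⟩ := hm
    generalize n * q = s at hmrq
    exact_mod_cast (show 1 ≤ r ∧ r + 1 ≤ 2 * n by omega)
  have hangle : m * π / n = r * π / n + q * (2 * π) := by
    rw [hmrq]; push_cast; field_simp
  rw [hangle, cos_add_int_mul_two_pi]
  apply cos_le_cos_of_le_of_le_two_pi_sub (by positivity)
  · exact div_le_div_of_nonneg_right (le_mul_of_one_le_left pi_pos.le hr_bounds.1) hn'.le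
  · rw [div_le_iff₀ hn', sub_mul, div_mul_cancel₀ _ hn'.ne']
    nlinarith [pi_pos]

theorem abs_cos_odd_mul_pi_div_le {n : ℕ} (hn : Even n) (hn0 : n ≠ 0) {m : ℤ} (hm : Odd m) :
    |cos (m * π / n)| ≤ cos (π / n) := by
  have hn' : (n : ℝ) ≠ 0 := by positivity
  have hshift : cos (((m + n : ℤ) : ℝ) * π / n) = -cos (m * π / n) := by
    rw [← cos_add_pi]; push_cast; field_simp
  have := cos_odd_mul_pi_div_le hn0 (hm.add_even ((Int.even_coe_nat n).2 hn))
  exact abs_le.2 ⟨by linarith, cos_odd_mul_pi_div_le hn0 hm⟩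

theorem cos_pi_div_pos {n : ℕ} (hn : 2 < n) : 0 < cos (π / n) := by
  apply cos_pos_of_mem_Ioo
  have : π / n < π / 2 := div_lt_div_of_pos_left pi_pos two_pos (by exact_mod_cast hn)
  constructor <;> linarith [div_pos pi_pos (show (0 : ℝ) < n by positivity)]

theorem sin_two_mul_pi_div_pos {n : ℕ} (hn : 2 < n) : 0 < sin (2 * π / n) := by
  have hn' : (0 : ℝ) < n := by positivity
  apply sin_pos_of_pos_of_lt_pi (by positivity)
  rw [div_lt_iff₀ hn']
  nlinarith [pi_pos, show (2 : ℝ) < n by exact_mod_cast hn]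

theorem sin_pi_div_pos {n : ℕ} (hn : 1 < n) : 0 < sin (π / n) := by
  have hn' : (1 : ℝ) < n := by exact_mod_cast hn
  apply sin_pos_of_pos_of_lt_pi (by positivity)
  exact div_lt_self pi_pos hn'

noncomputable def planarPair (α : ℝ) : ℝ × ℝ × ℝ →ₗ[ℝ] ℝ where
  toFun e := e.1 * cos α + e.2.1 * sin α
  map_add' _ _ := by simp only [Prod.fst_add, Prod.snd_add]; ring
  map_smul' _ _ := by simp only [Prod.smul_fst, Prod.smul_snd, smul_eq_mul, RingHom.id_apply]; ring

@[simp]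
theorem planarPair_apply (α : ℝ) (e : ℝ × ℝ × ℝ) : planarPair α e = e.1 * cos α + e.2.1 * sin α :=
  rfl

theorem planarPair_add_int_mul_two_pi (α : ℝ) (q : ℤ) (e : ℝ × ℝ × ℝ) :
    planarPair (α + q * (2 * π)) e = planarPair α e := by
  simp only [planarPair_apply, cos_add_int_mul_two_pi, sin_add_int_mul_two_pi]

theorem planarPair_add_pi (α : ℝ) (e : ℝ × ℝ × ℝ) : planarPair (α + π) e = -planarPair α e := by
  simp only [planarPair_apply, cos_add_pi, sin_add_pi]; ring

theorem eq_of_planarPair_eq {α β : ℝ} (hαβ : sin (β - α) ≠ 0) {p q : ℝ × ℝ × ℝ}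
    (hα : planarPair α p = planarPair α q) (hβ : planarPair β p = planarPair β q)
    (hz : p.2.2 = q.2.2) : p = q := by
  simp only [planarPair_apply] at hα hβ
  rw [sin_sub] at hαβ
  have hx : (p.1 - q.1) * (sin β * cos α - cos β * sin α) = 0 := by
    linear_combination sin β * hα - sin α * hβ
  have hy : (p.2.1 - q.2.1) * (sin β * cos α - cos β * sin α) = 0 := by
    linear_combination cos α * hβ - cos β * hα
  have hx' := sub_eq_zero.1 ((mul_eq_zero.1 hx).resolve_right hαβ)
  have hy' := sub_eq_zero.1 ((mul_eq_zero.1 hy).resolve_right hαβ)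
  exact Prod.ext hx' (Prod.ext hy' hz)

theorem exists_nonneg_planar_decomposition (e : ℝ × ℝ × ℝ) {φ δ : ℝ} (hδ : 0 < sin δ)
    (h₁ : planarPair (φ - 2 * δ) e ≤ planarPair φ e)
    (h₂ : planarPair (φ + 2 * δ) e ≤ planarPair φ e) :
    ∃ a b : ℝ, 0 ≤ a ∧ 0 ≤ b ∧ a + b = planarPair φ e ∧
      e.1 * cos δ = a * cos (φ - δ) + b * cos (φ + δ) ∧
      e.2.1 * cos δ = a * sin (φ - δ) + b * sin (φ + δ) := by
  simp only [planarPair_apply] at h₁ h₂ ⊢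
  set x := e.1
  set y := e.2.1
  -- the coefficients are cross products with the two edge directions `φ ∓ δ`
  set a := x * sin (φ + δ) - y * cos (φ + δ)
  set b := y * cos (φ - δ) - x * sin (φ - δ)
  have hdiff : ∀ u, 2 * sin δ * (x * sin u - y * cos u)
      = x * cos (u - δ) + y * sin (u - δ) - (x * cos (u + δ) + y * sin (u + δ)) := by
    intro u
    simp only [cos_add, cos_sub, sin_add, sin_sub]; ring
  have ha := hdiff (φ + δ)
  have hb := hdiff (φ - δ)
  rw [add_sub_cancel_right, add_assoc, ← two_mul] at ha
  rw [sub_add_cancel, sub_sub, ← two_mul] at hb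
  refine ⟨a / (2 * sin δ), b / (2 * sin δ),
    div_nonneg (nonneg_of_mul_nonneg_right (a := 2 * sin δ) (by linarith) (by positivity))
      (by positivity),
    div_nonneg (nonneg_of_mul_nonneg_right (a := 2 * sin δ) (by linarith) (by positivity))
      (by positivity),
    ?_, ?_, ?_⟩
  · field_simp
    simp only [a, b, cos_add, cos_sub, sin_add, sin_sub]; ring
  · field_simp
    simp only [a, b, cos_add, cos_sub, sin_add, sin_sub]
    linear_combination (-2 * x * sin δ * cos δ) * sin_sq_add_cos_sq φ
  · field_simp
    simp only [a, b, cos_add, cos_sub, sin_add, sin_sub]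
    linear_combination (-2 * y * sin δ * cos δ) * sin_sq_add_cos_sq φ

section Polygon

variable {n : ℕ}

theorem pair_pureState (e : ℝ × ℝ × ℝ) (k : ℕ) :
    pair e (pureState n k) = planarPair (2 * k * π / n) e + e.2.2 := by
  simp only [pair, pureState, planarPair_apply, mul_one]

theorem exists_fin_eq_add_mul (hn : n ≠ 0) (j : ℤ) : ∃ (k : Fin n) (q : ℤ), j = k + n * q := by
  have hn' : (0 : ℤ) < n := by omega
  have h0 := Int.emod_nonneg j hn'.ne'
  refine ⟨⟨(j % n).toNat, by have := Int.emod_lt_of_pos j hn'; omega⟩, j / n, ?_⟩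
  simp only [Int.toNat_of_nonneg h0, Int.emod_add_mul_ediv]

theorem planarPair_two_mul_add_mul (hn : n ≠ 0) (k q : ℤ) (e : ℝ × ℝ × ℝ) :
    planarPair (2 * ((k + n * q : ℤ) : ℝ) * π / n) e = planarPair (2 * k * π / n) e := by
  have hn' : (n : ℝ) ≠ 0 := by exact_mod_cast hn
  rw [show 2 * ((k + n * q : ℤ) : ℝ) * π / n = 2 * k * π / n + q * (2 * π) by
    push_cast; field_simp, planarPair_add_int_mul_two_pi]

theorem mem_polygonE_iff (hn : Even n) (hn0 : n ≠ 0) {e : ℝ × ℝ × ℝ} :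
    e ∈ polygonE n ↔ ∀ j : ℤ, |planarPair (2 * j * π / n) e| ≤ min e.2.2 (1 - e.2.2) := by
  refine ⟨fun he j => ?_, fun h k => ?_⟩
  · have hbounds : ∀ j : ℤ, 0 ≤ planarPair (2 * j * π / n) e + e.2.2 ∧
        planarPair (2 * j * π / n) e + e.2.2 ≤ 1 := by
      intro j
      obtain ⟨k, q, rfl⟩ := exists_fin_eq_add_mul hn0 j
      rw [planarPair_two_mul_add_mul hn0]
      have hk := he k
      rw [pair_pureState] at hk
      exact_mod_cast hk
    obtain ⟨m, rfl⟩ := hn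
    have hanti : planarPair (2 * ((j + m : ℤ) : ℝ) * π / ((m + m : ℕ) : ℝ)) e
        = -planarPair (2 * j * π / ((m + m : ℕ) : ℝ)) e := by
      rw [← planarPair_add_pi]
      congr 2
      have : (m : ℝ) ≠ 0 := by norm_cast; omega
      push_cast; field_simp; ring
    obtain ⟨h₁, h₂⟩ := hbounds j
    obtain ⟨h₃, h₄⟩ := hbounds (j + m)
    rw [hanti] at h₃ h₄
    exact le_min (abs_le.2 ⟨by linarith, by linarith⟩) (abs_le.2 ⟨by linarith, by linarith⟩)
  · have := abs_le.1 ((h k).trans (min_le_left _ _))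
    have := abs_le.1 ((h k).trans (min_le_right _ _))
    rw [pair_pureState]
    push_cast at *
    constructor <;> linarith

theorem convex_polygonE : Convex ℝ (polygonE n) := by
  intro p hp q hq a b ha hb hab k
  have hlin : ∀ w, pair (a • p + b • q) w = a • pair p w + b • pair q w := by
    intro w
    simp only [pair, Prod.fst_add, Prod.snd_add, Prod.smul_fst, Prod.smul_snd, smul_eq_mul]
    ring
  rw [hlin]
  exact convex_Icc (0 : ℝ) 1 (hp k) (hq k) ha hb hab

theorem exists_forall_planarPair_le (hn : n ≠ 0) (e : ℝ × ℝ × ℝ) :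
    ∃ k : ℤ, ∀ j : ℤ, planarPair (2 * j * π / n) e ≤ planarPair (2 * k * π / n) e := by
  have : Nonempty (Fin n) := ⟨⟨0, by omega⟩⟩
  obtain ⟨k, -, hk⟩ := Finset.exists_max_image Finset.univ
    (fun k : Fin n => planarPair (2 * ((k : ℤ) : ℝ) * π / n) e) Finset.univ_nonempty
  refine ⟨k, fun j => ?_⟩
  obtain ⟨k', q, rfl⟩ := exists_fin_eq_add_mul hn j
  rw [planarPair_two_mul_add_mul hn]
  exact hk k' (Finset.mem_univ _)

/-- The vertex at height `1/2` in direction `(2 i + 1) π / n`, where the facets of the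
states `i` and `i + 1` meet. -/
noncomputable def vertexEffect (n : ℕ) (i : ℤ) : ℝ × ℝ × ℝ :=
  (cos ((2 * i + 1) * π / n) / (2 * cos (π / n)),
    sin ((2 * i + 1) * π / n) / (2 * cos (π / n)), 1 / 2)

theorem planarPair_vertexEffect (j i : ℤ) :
    planarPair (2 * j * π / n) (vertexEffect n i)
      = cos (((2 * (j - i) - 1 : ℤ) : ℝ) * π / n) / (2 * cos (π / n)) := by
  rw [show ((2 * (j - i) - 1 : ℤ) : ℝ) * π / n = 2 * j * π / n - (2 * i + 1) * π / n by
    push_cast; ring, cos_sub]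
  simp only [vertexEffect, planarPair_apply]
  ring

theorem vertexEffect_add_mul (hn : n ≠ 0) (i q : ℤ) : vertexEffect n (i + n * q) = vertexEffect n i := by
  have hn' : (n : ℝ) ≠ 0 := by exact_mod_cast hn
  have hangle : (2 * ((i + n * q : ℤ) : ℝ) + 1) * π / n = (2 * i + 1) * π / n + q * (2 * π) := by
    push_cast; field_simp; ring
  simp only [vertexEffect, hangle, cos_add_int_mul_two_pi, sin_add_int_mul_two_pi]

theorem extEffect_eq_vertexEffect (hn : cos (π / n) ≠ 0) (k : ℕ) :
    extEffect n k = vertexEffect n (-k) := by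
  have hangle : (2 * ((-k : ℤ) : ℝ) + 1) * π / n = π / n - 2 * k * π / n := by push_cast; ring
  simp only [extEffect, vertexEffect, hangle, cos_sub, sin_sub, tan_eq_sin_div_cos]
  refine Prod.ext ?_ (Prod.ext ?_ rfl)
  · field_simp
  · field_simp; ring

theorem exists_extEffect_eq_vertexEffect (hn : 2 < n) (i : ℤ) :
    ∃ k : Fin n, extEffect n k = vertexEffect n i := by
  obtain ⟨k, q, hk⟩ := exists_fin_eq_add_mul (n := n) (by omega) (-i)
  refine ⟨k, ?_⟩
  rw [extEffect_eq_vertexEffect (cos_pi_div_pos hn).ne', show -((k : ℕ) : ℤ) = i + n * q by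
    linarith, vertexEffect_add_mul (by omega)]

theorem vertexEffect_mem_polygonE (hn : Even n) (hn2 : 2 < n) (i : ℤ) :
    vertexEffect n i ∈ polygonE n := by
  have hC := cos_pi_div_pos hn2
  rw [mem_polygonE_iff hn (by omega)]
  intro j
  rw [planarPair_vertexEffect, abs_div, abs_of_pos (show 0 < 2 * cos (π / n) by linarith),
    div_le_iff₀ (by linarith)]
  have := abs_cos_odd_mul_pi_div_le hn (by omega) (m := 2 * (j - i) - 1) ⟨j - i - 1, by ring⟩
  rw [show min (vertexEffect n i).2.2 (1 - (vertexEffect n i).2.2) = 1 / 2 by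
    simp only [vertexEffect]; norm_num]
  linarith

def polygonVertices (n : ℕ) : Set (ℝ × ℝ × ℝ) :=
  insert (0, 0, 0) (insert (0, 0, 1) {e | ∃ k : Fin n, e = extEffect n k})

theorem polygonVertices_subset_polygonE (hn : Even n) (hn2 : 2 < n) :
    polygonVertices n ⊆ polygonE n := by
  rintro _ (rfl | rfl | ⟨k, rfl⟩)
  · intro k; simp [pair]
  · intro k; simp [pair, pureState]
  · rw [extEffect_eq_vertexEffect (cos_pi_div_pos hn2).ne']
    exact vertexEffect_mem_polygonE hn hn2 _

theorem vertexEffect_mem_convexHull (hn : 2 < n) (i : ℤ) :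
    vertexEffect n i ∈ convexHull ℝ (polygonVertices n) := by
  obtain ⟨k, hk⟩ := exists_extEffect_eq_vertexEffect hn i
  exact subset_convexHull ℝ _ (Or.inr (Or.inr ⟨k, hk.symm⟩))

theorem polygonE_subset_convexHull (hn : Even n) (hn2 : 2 < n) :
    polygonE n ⊆ convexHull ℝ (polygonVertices n) := by
  intro e he
  have hn0 : n ≠ 0 := by omega
  have hC := cos_pi_div_pos hn2
  obtain ⟨k, hk⟩ := exists_forall_planarPair_le hn0 e
  obtain ⟨a, b, ha, hb, hab, hx, hy⟩ := exists_nonneg_planar_decomposition e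
    (φ := 2 * k * π / n) (δ := π / n) (sin_pi_div_pos (by omega))
    (by convert hk (k - 1) using 3; push_cast; ring) (by convert hk (k + 1) using 3; push_cast; ring)
  have hz := (mem_polygonE_iff hn hn0).1 he k
  rw [← hab] at hz
  have hz₁ := (le_abs_self _).trans (hz.trans (min_le_left _ _))
  have hz₂ := (le_abs_self _).trans (hz.trans (min_le_right _ _))
  have hA : (2 * ((k - 1 : ℤ) : ℝ) + 1) * π / n = 2 * k * π / n - π / n := by push_cast; ring
  have hB : (2 * (k : ℝ) + 1) * π / n = 2 * k * π / n + π / n := by ring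
  rw [← hA, ← hB] at hx hy
  have hx' : e.1 = 2 * a * (vertexEffect n (k - 1)).1 + 2 * b * (vertexEffect n k).1 := by
    rw [eq_div_of_mul_eq hC.ne' hx]; simp only [vertexEffect]; ring
  have hy' : e.2.1 = 2 * a * (vertexEffect n (k - 1)).2.1 + 2 * b * (vertexEffect n k).2.1 := by
    rw [eq_div_of_mul_eq hC.ne' hy]; simp only [vertexEffect]; ring
  have hcomb : e = ∑ i : Fin 4, ![1 - e.2.2 - a - b, e.2.2 - a - b, 2 * a, 2 * b] i •
      ![(0, 0, 0), (0, 0, 1), vertexEffect n (k - 1), vertexEffect n k] i := by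
    ext <;> simp only [Fin.sum_univ_four, Matrix.cons_val, Prod.fst_add, Prod.snd_add,
      Prod.smul_fst, Prod.smul_snd, smul_eq_mul]
    · linarith
    · linarith
    · simp only [vertexEffect]; ring
  rw [hcomb]
  refine (convex_convexHull ℝ _).sum_mem (fun i _ => ?_) ?_ (fun i _ => ?_)
  · fin_cases i <;> simp only [Fin.zero_eta, Fin.mk_one, Fin.reduceFinMk, Matrix.cons_val_zero,
      Matrix.cons_val_one, Matrix.cons_val] <;> linarith
  · simp only [Fin.sum_univ_four, Matrix.cons_val]; ring
  · fin_cases i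
    exacts [subset_convexHull ℝ _ (Or.inl rfl), subset_convexHull ℝ _ (Or.inr (Or.inl rfl)),
      vertexEffect_mem_convexHull hn2 _, vertexEffect_mem_convexHull hn2 _]

theorem polygonE_eq_convexHull (hn : Even n) (hn2 : 2 < n) :
    polygonE n = convexHull ℝ (polygonVertices n) :=
  (polygonE_subset_convexHull hn hn2).antisymm
    (convexHull_min (polygonVertices_subset_polygonE hn hn2) convex_polygonE)

theorem zero_le_min_of_mem_polygonE (hn : Even n) (hn0 : n ≠ 0) {e : ℝ × ℝ × ℝ}
    (he : e ∈ polygonE n) : 0 ≤ min e.2.2 (1 - e.2.2) :=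
  (abs_nonneg _).trans ((mem_polygonE_iff hn hn0).1 he 0)

theorem eq_of_planarPair_eq_of_snd_snd_eq (hn : 2 < n) (i : ℤ) {p q : ℝ × ℝ × ℝ}
    (h₀ : planarPair (2 * i * π / n) p = planarPair (2 * i * π / n) q)
    (h₁ : planarPair (2 * (i + 1 : ℤ) * π / n) p = planarPair (2 * (i + 1 : ℤ) * π / n) q)
    (hz : p.2.2 = q.2.2) : p = q := by
  refine eq_of_planarPair_eq ?_ h₀ h₁ hz
  rw [show 2 * ((i + 1 : ℤ) : ℝ) * π / n - 2 * i * π / n = 2 * π / n by push_cast; ring]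
  exact (sin_two_mul_pi_div_pos hn).ne'

theorem eq_apex_of_min_eq_zero (hn : Even n) (hn2 : 2 < n) {e : ℝ × ℝ × ℝ} (he : e ∈ polygonE n)
    (h : min e.2.2 (1 - e.2.2) = 0) : e = (0, 0, e.2.2) := by
  have hzero : ∀ j : ℤ, planarPair (2 * j * π / n) e = planarPair (2 * j * π / n) (0, 0, e.2.2) := by
    intro j
    have hj := (mem_polygonE_iff hn (by omega)).1 he j
    rw [h, abs_nonpos_iff] at hj
    simp [hj]
  exact eq_of_planarPair_eq_of_snd_snd_eq hn2 0 (hzero 0) (hzero 1) rfl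

theorem zero_mem_extremePoints_polygonE (hn : Even n) (hn2 : 2 < n) :
    ((0, 0, 0) : ℝ × ℝ × ℝ) ∈ (polygonE n).extremePoints ℝ := by
  refine mem_extremePoints_of_forall_le_of_eq
    (-(LinearMap.snd ℝ ℝ ℝ ∘ₗ LinearMap.snd ℝ ℝ (ℝ × ℝ)))
    (polygonVertices_subset_polygonE hn hn2 (Or.inl rfl)) (fun y hy => ?_) (fun y hy hy0 => ?_)
  · simpa using (le_min_iff.1 (zero_le_min_of_mem_polygonE hn (by omega) hy)).1
  · simp only [LinearMap.neg_apply, LinearMap.coe_comp, Function.comp_apply, LinearMap.snd_apply,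
      neg_zero, neg_eq_zero] at hy0
    simpa [hy0] using eq_apex_of_min_eq_zero hn hn2 hy (by simp [hy0])

theorem one_mem_extremePoints_polygonE (hn : Even n) (hn2 : 2 < n) :
    ((0, 0, 1) : ℝ × ℝ × ℝ) ∈ (polygonE n).extremePoints ℝ := by
  refine mem_extremePoints_of_forall_le_of_eq (LinearMap.snd ℝ ℝ ℝ ∘ₗ LinearMap.snd ℝ ℝ (ℝ × ℝ))
    (polygonVertices_subset_polygonE hn hn2 (Or.inr (Or.inl rfl))) (fun y hy => ?_)
    (fun y hy hy1 => ?_)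
  · simpa using (le_min_iff.1 (zero_le_min_of_mem_polygonE hn (by omega) hy)).2
  · simp only [LinearMap.coe_comp, Function.comp_apply, LinearMap.snd_apply] at hy1
    simpa [hy1] using eq_apex_of_min_eq_zero hn hn2 hy (by simp [hy1])

theorem vertexEffect_mem_extremePoints_polygonE (hn : Even n) (hn2 : 2 < n) (i : ℤ) :
    vertexEffect n i ∈ (polygonE n).extremePoints ℝ := by
  have hC := cos_pi_div_pos hn2
  have hbound : ∀ y ∈ polygonE n, ∀ j : ℤ, planarPair (2 * j * π / n) y ≤ min y.2.2 (1 - y.2.2) :=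
    fun y hy j => (le_abs_self _).trans ((mem_polygonE_iff hn (by omega)).1 hy j)
  have h₀ : planarPair (2 * i * π / n) (vertexEffect n i) = 1 / 2 := by
    rw [planarPair_vertexEffect]; field_simp; simp [neg_div]
  have h₁ : planarPair (2 * (i + 1 : ℤ) * π / n) (vertexEffect n i) = 1 / 2 := by
    rw [planarPair_vertexEffect]; field_simp; simp
  refine mem_extremePoints_of_forall_le_of_eq
    (planarPair (2 * i * π / n) + planarPair (2 * (i + 1 : ℤ) * π / n))
    (vertexEffect_mem_polygonE hn hn2 i) (fun y hy => ?_) (fun y hy hsum => ?_)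
  · rw [LinearMap.add_apply, LinearMap.add_apply, h₀, h₁]
    linarith [hbound y hy i, hbound y hy (i + 1), min_le_left y.2.2 (1 - y.2.2),
      min_le_right y.2.2 (1 - y.2.2)]
  · rw [LinearMap.add_apply, LinearMap.add_apply, h₀, h₁] at hsum
    have hi := hbound y hy i
    have hi₁ := hbound y hy (i + 1)
    have hz₁ := min_le_left y.2.2 (1 - y.2.2)
    have hz₂ := min_le_right y.2.2 (1 - y.2.2)
    refine eq_of_planarPair_eq_of_snd_snd_eq hn2 i (by linarith) (by linarith) ?_
    simp only [vertexEffect]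
    linarith

theorem polygonVertices_subset_extremePoints (hn : Even n) (hn2 : 2 < n) :
    polygonVertices n ⊆ (polygonE n).extremePoints ℝ := by
  rintro _ (rfl | rfl | ⟨k, rfl⟩)
  · exact zero_mem_extremePoints_polygonE hn hn2
  · exact one_mem_extremePoints_polygonE hn hn2
  · rw [extEffect_eq_vertexEffect (cos_pi_div_pos hn2).ne']
    exact vertexEffect_mem_extremePoints_polygonE hn hn2 _

end Polygon

/-- for even `n`, the extremal points of the polygon effect space are
exactly `o`, `u`, and the `n` points `e_k`, all of which lie on `z = 1/2`. -/
theorem polygon_extreme_points (n : ℕ) (hn : 4 ≤ n) (hne : Even n) :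
    Set.extremePoints ℝ (polygonE n)
      = insert ((0, 0, 0) : ℝ × ℝ × ℝ) (insert ((0, 0, 1) : ℝ × ℝ × ℝ)
          {e | ∃ k : Fin n, e = extEffect n k}) ∧
    ∀ k : Fin n, (extEffect n k).2.2 = 1/2 := by
  have hn2 : 2 < n := by omega
  refine ⟨Subset.antisymm ?_ (polygonVertices_subset_extremePoints hne hn2), fun _ => rfl⟩
  rw [polygonE_eq_convexHull hne hn2]
  exact extremePoints_convexHull_subset
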